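/- arXiv:2107.13814 — 5 statements merged into one kernel-verified Lean document; each statement's English description precedes it below -/
import Mathlib

section
/- Let A be an invertible real n×n matrix split as A = M − N with M invertible, let G = M⁻¹·N and g = M⁻¹·b. If the spectral radius of G is strictly less than 1, then for every initial vector X(0) the iteration X(t+1) = G·X(t) + g converges to A⁻¹·b, the unique solution of A·X = b. -/
open Matrix Filter Topology

/-- The spectral radius of a real square matrix: the maximum of the moduli of its
complex eigenvalues, i.e. the spectral radius of the matrix viewed over `ℂ`. -/
noncomputable def specRad {n : ℕ} (G : Matrix (Fin n) (Fin n) ℝ) : ENNReal :=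
  spectralRadius ℂ (G.map Complex.ofReal)

section aux

attribute [local instance] Matrix.linftyOpNormedRing Matrix.linftyOpNormedAlgebra

lemma pow_tendsto_zero_of_specRad_lt_one {n : ℕ} (a : Matrix (Fin n) (Fin n) ℂ)
    (h : spectralRadius ℂ a < 1) : Tendsto (fun k => ‖a ^ k‖) atTop (𝓝 0) := by
  obtain ⟨r, hr1, hr2⟩ := ENNReal.lt_iff_exists_nnreal_btwn.mp h
  have hg := spectrum.pow_nnnorm_pow_one_div_tendsto_nhds_spectralRadius a
  have hev : ∀ᶠ k : ℕ in atTop, ((‖a ^ k‖₊ : ENNReal) ^ (1 / (k:ℝ))) < (r : ENNReal) :=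
    hg.eventually_lt_const hr1
  have hr2' : (r : ℝ) < 1 := by exact_mod_cast hr2
  have key : ∀ᶠ k : ℕ in atTop, ‖a ^ k‖ ≤ (r : ℝ) ^ k := by
    filter_upwards [hev, eventually_ge_atTop 1] with k hk hk1
    have hkne : (k : ℝ) ≠ 0 := Nat.cast_ne_zero.mpr (by omega)
    have := ENNReal.rpow_lt_rpow hk (by positivity : (0:ℝ) < (k:ℝ))
    rw [← ENNReal.rpow_mul, one_div, inv_mul_cancel₀ hkne, ENNReal.rpow_one,
      ENNReal.rpow_natCast] at this
    have : ‖a ^ k‖₊ < r ^ k := by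
      rw [← ENNReal.coe_pow] at this
      exact_mod_cast this.le.lt_of_ne (by exact_mod_cast this.ne)
    calc ‖a ^ k‖ = (‖a ^ k‖₊ : ℝ) := rfl
      _ ≤ ((r ^ k : NNReal) : ℝ) := by exact_mod_cast this.le
      _ = (r : ℝ) ^ k := by push_cast; ring
  refine squeeze_zero_norm' ?_ (tendsto_pow_atTop_nhds_zero_of_lt_one r.coe_nonneg hr2')
  filter_upwards [key] with k hk
  simpa using hk

lemma real_pow_norm_tendsto_zero {n : ℕ} (G : Matrix (Fin n) (Fin n) ℝ)
    (h : specRad G < 1) : Tendsto (fun t => ‖G ^ t‖) atTop (𝓝 0) := by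
  have hmap : ∀ t : ℕ, ‖G ^ t‖ = ‖(G.map Complex.ofReal) ^ t‖ := by
    intro t
    have h1 : (G.map Complex.ofReal) ^ t = (G ^ t).map Complex.ofReal := by
      have := map_pow (Complex.ofRealHom.mapMatrix (m := Fin n)) G t
      exact this.symm
    rw [h1]
    have : ‖(G ^ t).map Complex.ofReal‖₊ = ‖G ^ t‖₊ := by
      simp [Matrix.linfty_opNNNorm_def, Matrix.map_apply]
    calc ‖G ^ t‖ = (‖G ^ t‖₊ : ℝ) := rfl
      _ = (‖(G ^ t).map Complex.ofReal‖₊ : ℝ) := by rw [this]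
      _ = _ := rfl
  simp_rw [hmap]
  exact pow_tendsto_zero_of_specRad_lt_one _ h

/-- For an invertible matrix `A` split as `A = M - N` with `M` invertible,
setting `G = M⁻¹·N` and `g = M⁻¹·b`: if `ρ(G) < 1`, then from every initial
vector the iteration `X(t+1) = G·X(t) + g` converges to `A⁻¹·b`, the unique
solution of `A·X = b`. -/
theorem stmt3 {n : ℕ} (A M N : Matrix (Fin n) (Fin n) ℝ) (b : Fin n → ℝ)
    (hA : IsUnit A.det) (hM : IsUnit M.det) (hsplit : A = M - N)
    (G : Matrix (Fin n) (Fin n) ℝ) (g : Fin n → ℝ)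
    (hG : G = M⁻¹ * N) (hg : g = M⁻¹ *ᵥ b)
    (hρ : specRad G < 1) :
    (∀ y : Fin n → ℝ, A *ᵥ y = b ↔ y = A⁻¹ *ᵥ b) ∧
    ∀ X : ℕ → Fin n → ℝ, (∀ t, X (t + 1) = G *ᵥ X t + g) →
      Tendsto X atTop (𝓝 (A⁻¹ *ᵥ b)) := by
  have hAinv : A⁻¹ * A = 1 := Matrix.nonsing_inv_mul A hA
  have hAinv' : A * A⁻¹ = 1 := Matrix.mul_nonsing_inv A hA
  have hMinv : M⁻¹ * M = 1 := Matrix.nonsing_inv_mul M hM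
  set x : Fin n → ℝ := A⁻¹ *ᵥ b with hx
  have hsol : ∀ y : Fin n → ℝ, A *ᵥ y = b ↔ y = x := by
    intro y
    constructor
    · intro h
      have : A⁻¹ *ᵥ (A *ᵥ y) = A⁻¹ *ᵥ b := by rw [h]
      rwa [Matrix.mulVec_mulVec, hAinv, Matrix.one_mulVec] at this
    · intro h
      rw [h, hx, Matrix.mulVec_mulVec, hAinv', Matrix.one_mulVec]
  refine ⟨hsol, fun X hX => ?_⟩
  -- fixed point equation
  have hfix : G *ᵥ x + g = x := by
    have hAx : A *ᵥ x = b := (hsol x).mpr rfl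
    have hMx : M *ᵥ x = N *ᵥ x + b := by
      have : (M - N) *ᵥ x = b := by rw [← hsplit]; exact hAx
      rw [Matrix.sub_mulVec] at this
      linear_combination (norm := module) this
    calc G *ᵥ x + g = M⁻¹ *ᵥ (N *ᵥ x) + M⁻¹ *ᵥ b := by
          rw [hG, hg, ← Matrix.mulVec_mulVec]
      _ = M⁻¹ *ᵥ (N *ᵥ x + b) := by rw [Matrix.mulVec_add]
      _ = M⁻¹ *ᵥ (M *ᵥ x) := by rw [hMx]
      _ = x := by rw [Matrix.mulVec_mulVec, hMinv, Matrix.one_mulVec]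
  -- error recursion
  have herr : ∀ t, X t - x = G ^ t *ᵥ (X 0 - x) := by
    intro t
    induction t with
    | zero => simp
    | succ t ih =>
      have : X (t + 1) - x = G *ᵥ (X t - x) := by
        rw [hX t, Matrix.mulVec_sub]
        conv_lhs => rw [← hfix]
        abel
      rw [this, ih, Matrix.mulVec_mulVec, pow_succ']
  -- convergence
  have hnorm : ∀ t, ‖X t - x‖ ≤ ‖G ^ t‖ * ‖X 0 - x‖ := by
    intro t
    rw [herr t]
    exact Matrix.linfty_opNorm_mulVec _ _
  have h0 : Tendsto (fun t => ‖X t - x‖) atTop (𝓝 0) := by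
    have := (real_pow_norm_tendsto_zero G hρ).mul_const ‖X 0 - x‖
    rw [zero_mul] at this
    exact squeeze_zero (fun t => norm_nonneg _) hnorm this
  have : Tendsto (fun t => X t - x) atTop (𝓝 0) := by
    rw [tendsto_zero_iff_norm_tendsto_zero]
    exact h0
  have := this.add_const x
  simpa using this

end aux
end

section
/- Let A be a real symmetric positive definite n×n matrix and b ∈ R^n. Define the conjugate gradient sequences from an arbitrary x₀ by r₀ = b − A·x₀, d₀ = r₀, and for each k: α_k = (r_kᵀ r_k)/(d_kᵀ A d_k), x_{k+1} = x_k + α_k d_k, r_{k+1} = r_k − α_k A d_k, β_k = (r_{k+1}ᵀ r_{k+1})/(r_kᵀ r_k), d_{k+1} = r_{k+1} + β_k d_k, as long as r_k ≠ 0. Then there exists m ≤ n such that r_m = 0, i.e., A·x_m = b; in particular the conjugate gradient method terminates with the exact solution after at most n iterations. -/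
set_option linter.unnecessarySimpa false

open Matrix

private lemma sum_dotProduct_aux {n : ℕ} {ι : Type*} (s : Finset ι)
    (f : ι → Fin n → ℝ) (v : Fin n → ℝ) :
    (∑ i ∈ s, f i) ⬝ᵥ v = ∑ i ∈ s, f i ⬝ᵥ v := by
  simp only [dotProduct, Finset.sum_apply, Finset.sum_mul]
  exact Finset.sum_comm

/-- For a real symmetric positive definite `n×n` matrix `A`, the conjugate
gradient iteration started from an arbitrary `x₀` (with `r₀ = b − A·x₀`,
`d₀ = r₀`, `α_k = (r_kᵀr_k)/(d_kᵀA d_k)`, `x_{k+1} = x_k + α_k d_k`,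
`r_{k+1} = r_k − α_k A d_k`, `β_k = (r_{k+1}ᵀr_{k+1})/(r_kᵀr_k)`,
`d_{k+1} = r_{k+1} + β_k d_k`) reaches a zero residual, i.e. the exact solution
of `A·x = b`, after at most `n` iterations. -/
theorem stmt9 {n : ℕ} (A : Matrix (Fin n) (Fin n) ℝ) (hA : A.PosDef)
    (b : Fin n → ℝ) (x r d : ℕ → Fin n → ℝ) (α β : ℕ → ℝ)
    (hr0 : r 0 = b - A *ᵥ x 0) (hd0 : d 0 = r 0)
    (hα : ∀ k, α k = (r k ⬝ᵥ r k) / (d k ⬝ᵥ (A *ᵥ d k)))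
    (hx : ∀ k, x (k + 1) = x k + α k • d k)
    (hr : ∀ k, r (k + 1) = r k - α k • (A *ᵥ d k))
    (hβ : ∀ k, β k = (r (k + 1) ⬝ᵥ r (k + 1)) / (r k ⬝ᵥ r k))
    (hd : ∀ k, d (k + 1) = r (k + 1) + β k • d k) :
    ∃ m ≤ n, r m = 0 ∧ A *ᵥ x m = b := by
  -- symmetry of the bilinear form
  have hsym : ∀ v w : Fin n → ℝ, v ⬝ᵥ (A *ᵥ w) = w ⬝ᵥ (A *ᵥ v) := by
    intro v w
    rw [dotProduct_mulVec, ← mulVec_transpose]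
    rw [show Aᵀ = A from by rw [← conjTranspose_eq_transpose_of_trivial]; exact hA.1,
      dotProduct_comm]
  have hpos : ∀ v : Fin n → ℝ, v ≠ 0 → 0 < v ⬝ᵥ (A *ᵥ v) := by
    intro v hv; simpa using hA.dotProduct_mulVec_pos hv
  -- residual identity
  have hres : ∀ k, r k = b - A *ᵥ x k := by
    intro k
    induction k with
    | zero => exact hr0
    | succ k ih =>
      rw [hr k, ih, hx k, mulVec_add, mulVec_smul]
      abel
  suffices h : ∃ m ≤ n, r m = 0 by
    obtain ⟨m, hm, hrm⟩ := h
    refine ⟨m, hm, hrm, ?_⟩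
    have h2 := hres m
    rw [hrm] at h2
    exact (sub_eq_zero.mp h2.symm).symm
  by_contra hcon
  push_neg at hcon
  -- hcon : ∀ m ≤ n, r m ≠ 0
  have hrrne : ∀ i ≤ n, r i ⬝ᵥ r i ≠ 0 := by
    intro i hi h0
    exact hcon i hi (dotProduct_self_eq_zero.mp h0)
  -- relation α i • (A d i) = r i − r (i+1)
  have hαd : ∀ i, α i • (A *ᵥ d i) = r i - r (i + 1) := by
    intro i; rw [hr i]; abel
  -- relation r (i+1) = d (i+1) − β i • d i
  have hrd : ∀ i, r (i + 1) = d (i + 1) - β i • d i := by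
    intro i; rw [hd i]; abel
  -- main invariant
  have main : ∀ k, k ≤ n →
      (∀ i ≤ k, r i ⬝ᵥ d i = r i ⬝ᵥ r i) ∧
      (∀ i j, i < j → j ≤ k → r i ⬝ᵥ r j = 0) ∧
      (∀ i j, i < j → j ≤ k → d i ⬝ᵥ r j = 0) ∧
      (∀ i j, i < j → j ≤ k → d i ⬝ᵥ (A *ᵥ d j) = 0) := by
    intro k
    induction k with
    | zero =>
      intro _
      refine ⟨?_, ?_, ?_, ?_⟩
      · intro i hi
        interval_cases i
        rw [hd0]
      all_goals intro i j hij hj; omega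
    | succ k IH =>
      intro hk1
      have hk : k ≤ n := Nat.le_of_succ_le hk1
      obtain ⟨hself, hrr, hdr, hdd⟩ := IH hk
      -- d i ≠ 0 for i ≤ k
      have hdne : ∀ i ≤ k, d i ≠ 0 := by
        intro i hi h0
        have h1 := hself i hi
        rw [h0, dotProduct_zero] at h1
        exact hrrne i (le_trans hi hk) h1.symm
      have hdAd : ∀ i ≤ k, 0 < d i ⬝ᵥ (A *ᵥ d i) := fun i hi => hpos _ (hdne i hi)
      have hαval : ∀ i ≤ k, α i * (d i ⬝ᵥ (A *ᵥ d i)) = r i ⬝ᵥ r i := by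
        intro i hi
        rw [hα i]
        exact div_mul_cancel₀ _ (ne_of_gt (hdAd i hi))
      have hαne : ∀ i ≤ k, α i ≠ 0 := by
        intro i hi
        rw [hα i]
        exact div_ne_zero (hrrne i (le_trans hi hk)) (ne_of_gt (hdAd i hi))
      -- r k ⬝ A d k = d k ⬝ A d k
      have fact1 : r k ⬝ᵥ (A *ᵥ d k) = d k ⬝ᵥ (A *ᵥ d k) := by
        cases k with
        | zero => rw [hd0]
        | succ j =>
          rw [hrd j, sub_dotProduct, smul_dotProduct, smul_eq_mul,
            hdd j (j + 1) (Nat.lt_succ_self j) le_rfl, mul_zero, sub_zero]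
      -- r i ⬝ A d k = 0 for i < k
      have fact2 : ∀ i < k, r i ⬝ᵥ (A *ᵥ d k) = 0 := by
        intro i hik
        cases i with
        | zero =>
          rw [← hd0]
          exact hdd 0 k hik le_rfl
        | succ j =>
          rw [hrd j, sub_dotProduct, smul_dotProduct, smul_eq_mul,
            hdd (j + 1) k hik le_rfl, hdd j k (by omega) le_rfl, mul_zero, sub_zero]
      -- new orthogonality of residuals
      have new_rr : ∀ i ≤ k, r i ⬝ᵥ r (k + 1) = 0 := by
        intro i hi
        rw [hr k, dotProduct_sub, dotProduct_smul, smul_eq_mul]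
        rcases eq_or_lt_of_le hi with he | hlt
        · subst he
          rw [fact1, hαval i le_rfl, sub_self]
        · rw [hrr i k hlt le_rfl, fact2 i hlt, mul_zero, sub_zero]
      -- new orthogonality of directions to new residual
      have new_dr : ∀ i ≤ k, d i ⬝ᵥ r (k + 1) = 0 := by
        intro i hi
        rw [hr k, dotProduct_sub, dotProduct_smul, smul_eq_mul]
        rcases eq_or_lt_of_le hi with he | hlt
        · subst he
          rw [hαval i le_rfl, dotProduct_comm, hself i le_rfl, sub_self]
        · rw [hdr i k hlt le_rfl, hdd i k hlt le_rfl, mul_zero, sub_zero]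
      -- conjugacy with new direction
      have new_dd : ∀ i ≤ k, d i ⬝ᵥ (A *ᵥ d (k + 1)) = 0 := by
        intro i hi
        have expand : d i ⬝ᵥ (A *ᵥ d (k + 1)) =
            r (k + 1) ⬝ᵥ (A *ᵥ d i) + β k * (d i ⬝ᵥ (A *ᵥ d k)) := by
          rw [hd k, mulVec_add, mulVec_smul, dotProduct_add, dotProduct_smul,
            smul_eq_mul, hsym (d i) (r (k + 1))]
        have hT : α i * (r (k + 1) ⬝ᵥ (A *ᵥ d i)) =
            r (k + 1) ⬝ᵥ r i - r (k + 1) ⬝ᵥ r (i + 1) := by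
          rw [← smul_eq_mul, ← dotProduct_smul, hαd i, dotProduct_sub]
        rcases eq_or_lt_of_le hi with he | hlt
        · subst he
          have hT' : α i * (r (i + 1) ⬝ᵥ (A *ᵥ d i)) = -(r (i + 1) ⬝ᵥ r (i + 1)) := by
            rw [hT, dotProduct_comm (r (i+1)) (r i), new_rr i le_rfl, zero_sub]
          have h3 : β i * (r i ⬝ᵥ r i) = r (i + 1) ⬝ᵥ r (i + 1) := by
            rw [hβ i]
            exact div_mul_cancel₀ _ (hrrne i (le_trans hi hk))
          have key : α i * (d i ⬝ᵥ (A *ᵥ d (i + 1))) = 0 := by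
            calc α i * (d i ⬝ᵥ (A *ᵥ d (i + 1)))
                = α i * (r (i + 1) ⬝ᵥ (A *ᵥ d i)) + β i * (α i * (d i ⬝ᵥ (A *ᵥ d i))) := by
                  rw [expand]; ring
              _ = -(r (i + 1) ⬝ᵥ r (i + 1)) + β i * (r i ⬝ᵥ r i) := by
                  rw [hT', hαval i le_rfl]
              _ = 0 := by rw [h3]; ring
          exact (mul_eq_zero.mp key).resolve_left (hαne i le_rfl)
        · have hT' : α i * (r (k + 1) ⬝ᵥ (A *ᵥ d i)) = 0 := by
            rw [hT, dotProduct_comm (r (k+1)) (r i), dotProduct_comm (r (k+1)) (r (i+1)),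
              new_rr i hi, new_rr (i + 1) hlt, sub_zero]
          have hT'' : r (k + 1) ⬝ᵥ (A *ᵥ d i) = 0 :=
            (mul_eq_zero.mp hT').resolve_left (hαne i hi)
          rw [expand, hT'', hdd i k hlt le_rfl, mul_zero, add_zero]
      have new_self : r (k + 1) ⬝ᵥ d (k + 1) = r (k + 1) ⬝ᵥ r (k + 1) := by
        rw [hd k, dotProduct_add, dotProduct_smul, smul_eq_mul,
          dotProduct_comm (r (k+1)) (d k), new_dr k le_rfl, mul_zero, add_zero]
      refine ⟨?_, ?_, ?_, ?_⟩
      · intro i hi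
        rcases Nat.lt_succ_iff_lt_or_eq.mp (Nat.lt_succ_of_le hi) with h | h
        · exact hself i (Nat.lt_succ_iff.mp h)
        · subst h; exact new_self
      · intro i j hij hj
        rcases Nat.lt_succ_iff_lt_or_eq.mp (Nat.lt_succ_of_le hj) with h | h
        · exact hrr i j hij (Nat.lt_succ_iff.mp h)
        · subst h; exact new_rr i (Nat.lt_succ_iff.mp hij)
      · intro i j hij hj
        rcases Nat.lt_succ_iff_lt_or_eq.mp (Nat.lt_succ_of_le hj) with h | h
        · exact hdr i j hij (Nat.lt_succ_iff.mp h)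
        · subst h; exact new_dr i (Nat.lt_succ_iff.mp hij)
      · intro i j hij hj
        rcases Nat.lt_succ_iff_lt_or_eq.mp (Nat.lt_succ_of_le hj) with h | h
        · exact hdd i j hij (Nat.lt_succ_iff.mp h)
        · subst h; exact new_dd i (Nat.lt_succ_iff.mp hij)
  obtain ⟨-, hrr, -, -⟩ := main n le_rfl
  -- pairwise orthogonality of r 0, ..., r n gives n+1 independent vectors in ℝ^n
  have horth : ∀ i j : Fin (n + 1), i ≠ j → r i ⬝ᵥ r j = 0 := by
    intro i j hij
    rcases lt_or_gt_of_ne hij with h | h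
    · exact hrr i j (by exact_mod_cast h) (Nat.lt_succ_iff.mp j.2)
    · rw [dotProduct_comm]
      exact hrr j i (by exact_mod_cast h) (Nat.lt_succ_iff.mp i.2)
  have hli : LinearIndependent ℝ (fun i : Fin (n + 1) => r i) := by
    rw [Fintype.linearIndependent_iff]
    intro g hg i
    have h0 : (∑ j, g j • r (j : ℕ)) ⬝ᵥ r (i : ℕ) = 0 := by rw [hg, zero_dotProduct]
    rw [sum_dotProduct_aux] at h0
    rw [Finset.sum_eq_single i (fun j _ hj => by
        rw [smul_dotProduct, smul_eq_mul, horth j i hj, mul_zero])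
      (fun h => absurd (Finset.mem_univ i) h)] at h0
    rw [smul_dotProduct, smul_eq_mul] at h0
    exact (mul_eq_zero.mp h0).resolve_right (hrrne i (Nat.lt_succ_iff.mp i.2))
  have hcard := hli.fintype_card_le_finrank
  have : n + 1 ≤ n := by simpa using hcard
  omega
end

section
/- Let A be a real symmetric positive definite n×n matrix and b ∈ R^n, and define the conjugate gradient sequences from an arbitrary x₀ by r₀ = b − A·x₀, d₀ = r₀, α_k = (r_kᵀ r_k)/(d_kᵀ A d_k), x_{k+1} = x_k + α_k d_k, r_{k+1} = r_k − α_k A d_k, β_k = (r_{k+1}ᵀ r_{k+1})/(r_kᵀ r_k), d_{k+1} = r_{k+1} + β_k d_k. Suppose r_k ≠ 0 for all k < m. Then the residuals produced up to step m are mutually orthogonal: r_iᵀ r_j = 0 for all i ≠ j with i, j ≤ m. -/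
open Matrix

/-- In the conjugate gradient iteration for a real symmetric positive definite
matrix `A`, as long as the residuals `r_k` are nonzero for `k < m`, the
residuals produced up to step `m` are mutually orthogonal: `r_iᵀ r_j = 0` for
all `i ≠ j` with `i, j ≤ m`. -/
theorem stmt10 {n : ℕ} (A : Matrix (Fin n) (Fin n) ℝ) (hA : A.PosDef)
    (b : Fin n → ℝ) (x r d : ℕ → Fin n → ℝ) (α β : ℕ → ℝ) (m : ℕ)
    (hr0 : r 0 = b - A *ᵥ x 0) (hd0 : d 0 = r 0)
    (hα : ∀ k, α k = (r k ⬝ᵥ r k) / (d k ⬝ᵥ (A *ᵥ d k)))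
    (hx : ∀ k, x (k + 1) = x k + α k • d k)
    (hr : ∀ k, r (k + 1) = r k - α k • (A *ᵥ d k))
    (hβ : ∀ k, β k = (r (k + 1) ⬝ᵥ r (k + 1)) / (r k ⬝ᵥ r k))
    (hd : ∀ k, d (k + 1) = r (k + 1) + β k • d k)
    (hnz : ∀ k < m, r k ≠ 0) :
    ∀ i j, i ≤ m → j ≤ m → i ≠ j → r i ⬝ᵥ r j = 0 := by
  have hsym : ∀ u v : Fin n → ℝ, u ⬝ᵥ (A *ᵥ v) = v ⬝ᵥ (A *ᵥ u) := by
    intro u v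
    have h : Aᵀ = A := by rw [← conjTranspose_eq_transpose_of_trivial]; exact hA.1
    rw [dotProduct_mulVec, ← mulVec_transpose, h, dotProduct_comm]
  have hpos : ∀ u : Fin n → ℝ, u ≠ 0 → 0 < u ⬝ᵥ (A *ᵥ u) := by
    intro u hu; simpa using hA.dotProduct_mulVec_pos hu
  have hAd : ∀ j, α j • (A *ᵥ d j) = r j - r (j + 1) := by
    intro j; rw [hr j]; abel
  -- key invariant
  have key : ∀ k, k ≤ m → ∀ i j, i < j → j ≤ k →
      r i ⬝ᵥ r j = 0 ∧ d i ⬝ᵥ (A *ᵥ d j) = 0 ∧ r j ⬝ᵥ d i = 0 := by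
    intro k
    induction k with
    | zero => intro _ i j hij hj; omega
    | succ k ih =>
      intro hk i j hij hj
      have hk' : k ≤ m := Nat.le_of_succ_le hk
      have IH := ih hk'
      have IHo : ∀ p q, p < q → q ≤ k → r p ⬝ᵥ r q = 0 := fun p q h1 h2 => (IH p q h1 h2).1
      have IHc : ∀ p q, p ≠ q → p ≤ k → q ≤ k → d p ⬝ᵥ (A *ᵥ d q) = 0 := by
        intro p q hne hp hq
        rcases Nat.lt_or_ge p q with h | h
        · exact (IH p q h hq).2.1
        · rw [hsym]; exact (IH q p (by omega) hp).2.1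
      have IHd : ∀ p q, p < q → q ≤ k → r q ⬝ᵥ d p = 0 := fun p q h1 h2 => (IH p q h1 h2).2.2
      have hrnz : ∀ j, j ≤ k → r j ⬝ᵥ r j ≠ 0 := by
        intro j hjk
        have : r j ≠ 0 := hnz j (by omega)
        simpa [dotProduct_self_eq_zero] using this
      have hrd : ∀ j, j ≤ k → r j ⬝ᵥ d j = r j ⬝ᵥ r j := by
        intro j hjk
        match j with
        | 0 => rw [hd0]
        | t + 1 =>
          rw [hd t, dotProduct_add, dotProduct_smul, smul_eq_mul,
            IHd t (t + 1) (by omega) hjk, mul_zero, add_zero]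
      have hdAd : ∀ j, j ≤ k → 0 < d j ⬝ᵥ (A *ᵥ d j) := by
        intro j hjk
        refine hpos _ ?_
        intro h0
        apply hrnz j hjk
        rw [← hrd j hjk, h0, dotProduct_zero]
      have hαmul : ∀ j, j ≤ k → α j * (d j ⬝ᵥ (A *ᵥ d j)) = r j ⬝ᵥ r j := by
        intro j hjk
        rw [hα j, div_mul_cancel₀ _ (ne_of_gt (hdAd j hjk))]
      have hαnz : ∀ j, j ≤ k → α j ≠ 0 := by
        intro j hjk h0
        exact hrnz j hjk (by rw [← hαmul j hjk, h0, zero_mul])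
      have hβmul : β k * (r k ⬝ᵥ r k) = r (k + 1) ⬝ᵥ r (k + 1) := by
        rw [hβ k, div_mul_cancel₀ _ (hrnz k le_rfl)]
      -- d k ⬝ A r i = d k ⬝ A d i  for i ≤ k
      have hdar : ∀ i, i ≤ k → d k ⬝ᵥ (A *ᵥ r i) = d k ⬝ᵥ (A *ᵥ d i) := by
        intro i hik
        match i with
        | 0 => rw [hd0]
        | t + 1 =>
          have hrt : r (t + 1) = d (t + 1) - β t • d t := by rw [hd t]; abel
          rw [hrt, mulVec_sub, dotProduct_sub, mulVec_smul, dotProduct_smul, smul_eq_mul,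
            IHc k t (by omega) le_rfl (by omega), mul_zero, sub_zero]
      -- new orthogonality: r i ⬝ r (k+1) = 0 for i ≤ k
      have Onew : ∀ i, i ≤ k → r i ⬝ᵥ r (k + 1) = 0 := by
        intro i hik
        rw [hr k, dotProduct_sub, dotProduct_smul, smul_eq_mul, hsym (r i)]
        rcases Nat.lt_or_ge i k with h | h
        · rw [IHo i k h le_rfl, hdar i (by omega),
            IHc k i (by omega) le_rfl (by omega), mul_zero, sub_zero]
        · have hik' : i = k := by omega
          subst hik'
          rw [hdar i le_rfl, hαmul i le_rfl, sub_self]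
      -- r (k+1) ⊥ d i for i ≤ k
      have Dnew : ∀ i, i ≤ k → r (k + 1) ⬝ᵥ d i = 0 := by
        intro i
        induction i with
        | zero =>
          intro _
          rw [hd0, dotProduct_comm]
          exact Onew 0 (Nat.zero_le k)
        | succ t iht =>
          intro h
          rw [hd t, dotProduct_add, dotProduct_smul, smul_eq_mul, iht (by omega),
            dotProduct_comm, Onew (t + 1) h, mul_zero, add_zero]
      -- conjugacy: d i ⬝ A d (k+1) = 0 for i ≤ k
      have Cnew : ∀ i, i ≤ k → d i ⬝ᵥ (A *ᵥ d (k + 1)) = 0 := by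
        intro i hik
        have hstep : r (k + 1) ⬝ᵥ (α i • (A *ᵥ d i))
            = r (k + 1) ⬝ᵥ r i - r (k + 1) ⬝ᵥ r (i + 1) := by
          rw [hAd i, dotProduct_sub]
        rw [hd k, mulVec_add, dotProduct_add, mulVec_smul, dotProduct_smul, smul_eq_mul]
        rcases Nat.lt_or_ge i k with h | h
        · have h1 : d i ⬝ᵥ (A *ᵥ r (k + 1)) = 0 := by
            have h0 : α i * (r (k + 1) ⬝ᵥ (A *ᵥ d i)) = 0 := by
              rw [← smul_eq_mul, ← dotProduct_smul, hstep, dotProduct_comm,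
                Onew i (by omega), dotProduct_comm, Onew (i + 1) (by omega)]
              simp
            rcases mul_eq_zero.mp h0 with h2 | h2
            · exact absurd h2 (hαnz i (by omega))
            · rw [hsym]; exact h2
          rw [h1, IHc i k (by omega) (by omega) le_rfl, mul_zero, add_zero]
        · have hik' : i = k := by omega
          subst hik'
          have e1 : r (i + 1) ⬝ᵥ (α i • (A *ᵥ d i)) = -(r (i + 1) ⬝ᵥ r (i + 1)) := by
            rw [hstep, dotProduct_comm, Onew i le_rfl, zero_sub]
          have e2 : α i * (r (i + 1) ⬝ᵥ (A *ᵥ d i)) = -(r (i + 1) ⬝ᵥ r (i + 1)) := by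
            rw [← e1, dotProduct_smul, smul_eq_mul]
          have e3 : d i ⬝ᵥ (A *ᵥ r (i + 1)) = r (i + 1) ⬝ᵥ (A *ᵥ d i) := hsym _ _
          have e4 : β i * (α i * (d i ⬝ᵥ (A *ᵥ d i))) = r (i + 1) ⬝ᵥ r (i + 1) := by
            rw [hαmul i le_rfl, hβmul]
          refine mul_left_cancel₀ (hαnz i le_rfl) ?_
          rw [mul_zero, mul_add, e3, e2]
          linear_combination e4
      rcases Nat.lt_or_ge j (k + 1) with hjk | hjk
      · exact IH i j hij (by omega)
      · have hj' : j = k + 1 := by omega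
        subst hj'
        exact ⟨Onew i (by omega), Cnew i (by omega), Dnew i (by omega)⟩
  intro i j hi hj hne
  rcases Nat.lt_or_ge i j with h | h
  · exact (key m le_rfl i j h hj).1
  · rw [dotProduct_comm]
    exact (key m le_rfl j i (by omega) hi).1
end

section
/- Let A be a real symmetric positive definite n×n matrix and b ∈ R^n, and define the conjugate gradient sequences from an arbitrary x₀ by r₀ = b − A·x₀, d₀ = r₀, α_k = (r_kᵀ r_k)/(d_kᵀ A d_k), x_{k+1} = x_k + α_k d_k, r_{k+1} = r_k − α_k A d_k, β_k = (r_{k+1}ᵀ r_{k+1})/(r_kᵀ r_k), d_{k+1} = r_{k+1} + β_k d_k. Suppose r_k ≠ 0 for all k < m. Then the search directions produced up to step m are mutually A-conjugate: d_iᵀ A d_j = 0 for all i ≠ j with i, j ≤ m. -/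
open Matrix

/-- In the conjugate gradient iteration for a real symmetric positive definite
matrix `A`, as long as the residuals `r_k` are nonzero for `k < m`, the search
directions produced up to step `m` are mutually `A`-conjugate:
`d_iᵀ A d_j = 0` for all `i ≠ j` with `i, j ≤ m`. -/
theorem stmt11 {n : ℕ} (A : Matrix (Fin n) (Fin n) ℝ) (hA : A.PosDef)
    (b : Fin n → ℝ) (x r d : ℕ → Fin n → ℝ) (α β : ℕ → ℝ) (m : ℕ)
    (hr0 : r 0 = b - A *ᵥ x 0) (hd0 : d 0 = r 0)
    (hα : ∀ k, α k = (r k ⬝ᵥ r k) / (d k ⬝ᵥ (A *ᵥ d k)))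
    (hx : ∀ k, x (k + 1) = x k + α k • d k)
    (hr : ∀ k, r (k + 1) = r k - α k • (A *ᵥ d k))
    (hβ : ∀ k, β k = (r (k + 1) ⬝ᵥ r (k + 1)) / (r k ⬝ᵥ r k))
    (hd : ∀ k, d (k + 1) = r (k + 1) + β k • d k)
    (hnz : ∀ k < m, r k ≠ 0) :
    ∀ i j, i ≤ m → j ≤ m → i ≠ j → d i ⬝ᵥ (A *ᵥ d j) = 0 := by
  have hsym : ∀ u v : Fin n → ℝ, u ⬝ᵥ (A *ᵥ v) = v ⬝ᵥ (A *ᵥ u) := by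
    have hAt : Aᵀ = A := by
      have := hA.1
      rwa [Matrix.IsHermitian, conjTranspose_eq_transpose_of_trivial] at this
    intro u v
    rw [dotProduct_mulVec, ← mulVec_transpose, hAt, dotProduct_comm]
  have hrsub : ∀ i, r (i + 1) = d (i + 1) - β i • d i := by
    intro i; rw [hd i]; abel
  have key : ∀ k, k ≤ m →
      (∀ i j, i < j → j ≤ k → r i ⬝ᵥ r j = 0) ∧
      (∀ i j, i < j → j ≤ k → r j ⬝ᵥ d i = 0) ∧
      (∀ j, j ≤ k → r j ⬝ᵥ d j = r j ⬝ᵥ r j) ∧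
      (∀ i j, i < j → j ≤ k → d i ⬝ᵥ (A *ᵥ d j) = 0) := by
    intro k
    induction k with
    | zero =>
      intro _
      refine ⟨fun i j hij hj => absurd hj (by omega),
              fun i j hij hj => absurd hj (by omega), ?_,
              fun i j hij hj => absurd hj (by omega)⟩
      intro j hj
      interval_cases j
      rw [hd0]
    | succ k ih =>
      intro hk1
      obtain ⟨hrr, hrd, hrdd, hdd⟩ := ih (by omega)
      -- symmetric conjugacy up to k
      have hdd' : ∀ i j, i ≤ k → j ≤ k → i ≠ j → d i ⬝ᵥ (A *ᵥ d j) = 0 := by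
        intro i j hi hj hij
        rcases lt_or_gt_of_ne hij with h | h
        · exact hdd i j h hj
        · rw [hsym]; exact hdd j i h hi
      have hrnz : ∀ i, i ≤ k → r i ⬝ᵥ r i ≠ 0 := by
        intro i hi h0
        exact hnz i (by omega) (dotProduct_self_eq_zero.mp h0)
      have hdnz : ∀ i, i ≤ k → d i ≠ 0 := by
        intro i hi h0
        have h1 := hrdd i hi
        rw [h0, dotProduct_zero] at h1
        exact hrnz i hi h1.symm
      have hdAd : ∀ i, i ≤ k → d i ⬝ᵥ (A *ᵥ d i) ≠ 0 := by
        intro i hi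
        exact (hA.dotProduct_mulVec_pos (hdnz i hi)).ne'
      have hαmul : ∀ i, i ≤ k → α i * (d i ⬝ᵥ (A *ᵥ d i)) = r i ⬝ᵥ r i := by
        intro i hi
        rw [hα i, div_mul_cancel₀ _ (hdAd i hi)]
      have hαnz : ∀ i, i ≤ k → α i ≠ 0 := by
        intro i hi h0
        have h1 := hαmul i hi
        rw [h0, zero_mul] at h1
        exact hrnz i hi h1.symm
      -- d k is A-orthogonal to earlier residuals
      have hArk : ∀ i, i < k → d k ⬝ᵥ (A *ᵥ r i) = 0 := by
        intro i hi
        match i with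
        | 0 =>
          rw [← hd0]
          exact hdd' k 0 le_rfl (by omega) (by omega)
        | Nat.succ t =>
          rw [hrsub t, mulVec_sub, mulVec_smul, dotProduct_sub, dotProduct_smul,
            hdd' k (t + 1) le_rfl (by omega) (by omega),
            hdd' k t le_rfl (by omega) (by omega)]
          simp
      have hArkk : d k ⬝ᵥ (A *ᵥ r k) = d k ⬝ᵥ (A *ᵥ d k) := by
        match k with
        | 0 => rw [hd0]
        | Nat.succ t =>
          rw [hrsub t, mulVec_sub, mulVec_smul, dotProduct_sub, dotProduct_smul,
            hdd' (t + 1) t le_rfl (by omega) (by omega)]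
          simp
      -- new residual orthogonality
      have hb' : ∀ i, i ≤ k → r i ⬝ᵥ r (k + 1) = 0 := by
        intro i hi
        rw [hr k, dotProduct_sub, dotProduct_smul, smul_eq_mul, hsym (r i) (d k)]
        rcases eq_or_lt_of_le hi with h | h
        · subst h
          rw [hArkk, hαmul i le_rfl]
          ring
        · rw [hrr i k h le_rfl, hArk i h]
          ring
      -- new residual orthogonal to old directions
      have hc' : ∀ i, i ≤ k → r (k + 1) ⬝ᵥ d i = 0 := by
        intro i hi
        rw [hr k, sub_dotProduct, smul_dotProduct, smul_eq_mul,
          dotProduct_comm (A *ᵥ d k) (d i)]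
        rcases eq_or_lt_of_le hi with h | h
        · subst h
          rw [hrdd i le_rfl, hαmul i le_rfl]
          ring
        · rw [hrd i k h le_rfl, hdd' i k (by omega) le_rfl (by omega)]
          ring
      have hd' : r (k + 1) ⬝ᵥ d (k + 1) = r (k + 1) ⬝ᵥ r (k + 1) := by
        rw [hd k, dotProduct_add, dotProduct_smul, smul_eq_mul, hc' k le_rfl]
        ring
      -- new conjugacy
      have ha' : ∀ i, i ≤ k → d i ⬝ᵥ (A *ᵥ d (k + 1)) = 0 := by
        intro i hi
        rw [hd k, mulVec_add, mulVec_smul, dotProduct_add, dotProduct_smul, smul_eq_mul]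
        have hAdi : α i * (r (k + 1) ⬝ᵥ (A *ᵥ d i))
            = r (k + 1) ⬝ᵥ r i - r (k + 1) ⬝ᵥ r (i + 1) := by
          have h1 : α i • (A *ᵥ d i) = r i - r (i + 1) := by
            rw [hr i]; abel
          calc α i * (r (k + 1) ⬝ᵥ (A *ᵥ d i))
              = r (k + 1) ⬝ᵥ (α i • (A *ᵥ d i)) := by
                rw [dotProduct_smul, smul_eq_mul]
            _ = r (k + 1) ⬝ᵥ r i - r (k + 1) ⬝ᵥ r (i + 1) := by
                rw [h1, dotProduct_sub]
        rcases eq_or_lt_of_le hi with h | h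
        · subst h
          have h2 : r (i + 1) ⬝ᵥ r i = 0 := by
            rw [dotProduct_comm]; exact hb' i le_rfl
          rw [h2, zero_sub] at hAdi
          have h3 : β i * (r i ⬝ᵥ r i) = r (i + 1) ⬝ᵥ r (i + 1) := by
            rw [hβ i, div_mul_cancel₀ _ (hrnz i le_rfl)]
          have h4 : α i * (d i ⬝ᵥ (A *ᵥ r (i + 1)) + β i * (d i ⬝ᵥ (A *ᵥ d i))) = 0 := by
            rw [hsym (d i) (r (i + 1)), mul_add]
            have h5 : α i * (β i * (d i ⬝ᵥ (A *ᵥ d i)))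
                = β i * (α i * (d i ⬝ᵥ (A *ᵥ d i))) := by ring
            rw [h5, hαmul i le_rfl, h3, hAdi]
            ring
          exact (mul_eq_zero.mp h4).resolve_left (hαnz i le_rfl)
        · have h2 : r (k + 1) ⬝ᵥ r i = 0 := by
            rw [dotProduct_comm]; exact hb' i (by omega)
          have h3 : r (k + 1) ⬝ᵥ r (i + 1) = 0 := by
            rw [dotProduct_comm]; exact hb' (i + 1) (by omega)
          rw [h2, h3, sub_zero] at hAdi
          have h4 : r (k + 1) ⬝ᵥ (A *ᵥ d i) = 0 :=
            (mul_eq_zero.mp hAdi).resolve_left (hαnz i (by omega))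
          rw [hsym (d i) (r (k + 1)), h4, hdd' i k (by omega) le_rfl (by omega)]
          ring
      -- assemble
      refine ⟨?_, ?_, ?_, ?_⟩
      · intro i j hij hj
        rcases (by omega : j ≤ k ∨ j = k + 1) with h | h
        · exact hrr i j hij h
        · subst h; exact hb' i (by omega)
      · intro i j hij hj
        rcases (by omega : j ≤ k ∨ j = k + 1) with h | h
        · exact hrd i j hij h
        · subst h; exact hc' i (by omega)
      · intro j hj
        rcases (by omega : j ≤ k ∨ j = k + 1) with h | h
        · exact hrdd j h
        · subst h; exact hd'
      · intro i j hij hj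
        rcases (by omega : j ≤ k ∨ j = k + 1) with h | h
        · exact hdd i j hij h
        · subst h; exact ha' i (by omega)
  intro i j hi hj hij
  rcases lt_or_gt_of_ne hij with h | h
  · exact (key m le_rfl).2.2.2 i j h hj
  · rw [hsym]
    exact (key m le_rfl).2.2.2 j i h hi
end

section
/- Let A be a real n×n matrix decomposed as A = D − L − U, where D is the diagonal part of A and −L, −U are the strictly lower and strictly upper triangular parts, and suppose all diagonal entries of A are nonzero. If the spectral radius of the Jacobi iteration matrix D⁻¹(L + U) is strictly less than 1 and A is invertible, then for every initial vector X(0) the Jacobi iteration X(t+1) = D⁻¹(L+U)·X(t) + D⁻¹·b converges to A⁻¹·b. -/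
open Matrix Filter Topology

section Aux
attribute [local instance] Matrix.linftyOpNormedRing Matrix.linftyOpNormedAlgebra

lemma aux_nnnorm_map {n : ℕ} (M : Matrix (Fin n) (Fin n) ℝ) :
    ‖M.map Complex.ofReal‖₊ = ‖M‖₊ := by
  simp only [Matrix.linfty_opNNNorm_def, Matrix.map_apply]
  congr 1
  ext i
  simp [Pi.nnnorm_def]

lemma aux_pow_norm_tendsto {n : ℕ} (G : Matrix (Fin n) (Fin n) ℝ)
    (h : specRad G < 1) : Tendsto (fun t : ℕ => ‖G ^ t‖) atTop (𝓝 0) := by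
  set a : Matrix (Fin n) (Fin n) ℂ := G.map Complex.ofReal with ha
  have hmap : ∀ t : ℕ, a ^ t = (G ^ t).map Complex.ofReal := by
    intro t
    have := map_pow (Complex.ofRealHom.mapMatrix (m := Fin n)) G t
    exact this.symm
  obtain ⟨c, hc1, hc2⟩ := exists_between h
  lift c to NNReal using (hc2.trans_le le_top).ne
  have hc2' : c < 1 := by exact_mod_cast hc2
  have hG := spectrum.pow_nnnorm_pow_one_div_tendsto_nhds_spectralRadius a
  have hev : ∀ᶠ t : ℕ in atTop, (‖a ^ t‖₊ : ENNReal) ^ (1 / (t : ℝ)) < (c : ENNReal) :=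
    hG.eventually_lt_const hc1
  have hbound : ∀ᶠ t : ℕ in atTop, ‖G ^ t‖ ≤ (c : ℝ) ^ t := by
    filter_upwards [hev, eventually_ge_atTop 1] with t ht ht1
    have htpos : (0 : ℝ) < t := by exact_mod_cast ht1
    have key : ((‖a ^ t‖₊ : ENNReal) ^ (1 / (t : ℝ))) ^ (t : ℝ) < (c : ENNReal) ^ (t : ℝ) :=
      ENNReal.rpow_lt_rpow ht htpos
    rw [← ENNReal.rpow_mul, one_div, inv_mul_cancel₀ (ne_of_gt htpos),
      ENNReal.rpow_one, ENNReal.rpow_natCast] at key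
    have h2 : (‖a ^ t‖₊ : ENNReal) < (c : ENNReal) ^ (t : ℕ) := key
    have h3 : ‖a ^ t‖₊ < c ^ t := by exact_mod_cast h2
    have h4 : ‖a ^ t‖ ≤ (c : ℝ) ^ t := by exact_mod_cast h3.le
    rwa [hmap t, ← coe_nnnorm, aux_nnnorm_map, coe_nnnorm] at h4
  refine squeeze_zero' (Eventually.of_forall fun t => norm_nonneg _) hbound ?_
  exact tendsto_pow_atTop_nhds_zero_of_lt_one c.coe_nonneg hc2'

/-- Let `A = D − L − U` with `D` the diagonal part of `A` and `−L`, `−U` its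
strictly lower and strictly upper triangular parts, where all diagonal entries
of `A` are nonzero. If the spectral radius of the Jacobi iteration matrix
`D⁻¹(L + U)` is strictly less than 1 and `A` is invertible, then for every
initial vector the Jacobi iteration `X(t+1) = D⁻¹(L+U)·X(t) + D⁻¹·b`
converges to `A⁻¹·b`. -/
theorem stmt17 {n : ℕ} (A : Matrix (Fin n) (Fin n) ℝ) (b : Fin n → ℝ)
    (hdiag : ∀ i, A i i ≠ 0) (hA : IsUnit A.det)
    (D L U : Matrix (Fin n) (Fin n) ℝ)
    (hD : D = Matrix.diagonal fun i => A i i)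
    (hL : L = Matrix.of fun i j => if j < i then -A i j else 0)
    (hU : U = Matrix.of fun i j => if i < j then -A i j else 0)
    (hρ : specRad (D⁻¹ * (L + U)) < 1) :
    ∀ X : ℕ → Fin n → ℝ,
      (∀ t, X (t + 1) = (D⁻¹ * (L + U)) *ᵥ X t + D⁻¹ *ᵥ b) →
      Tendsto X atTop (𝓝 (A⁻¹ *ᵥ b)) := by
  intro X hX
  set G := D⁻¹ * (L + U) with hG
  set x := A⁻¹ *ᵥ b with hx
  have hDdet : IsUnit D.det := by
    rw [hD, det_diagonal]
    exact (Finset.prod_ne_zero_iff.mpr fun i _ => hdiag i).isUnit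
  have hALU : A = D - (L + U) := by
    subst hD hL hU
    ext i j
    rcases lt_trichotomy i j with hij | rfl | hij
    · simp [Matrix.sub_apply, Matrix.add_apply, Matrix.diagonal_apply_ne _ hij.ne,
        hij, not_lt_of_gt hij]
    · simp [Matrix.sub_apply, Matrix.add_apply]
    · simp [Matrix.sub_apply, Matrix.add_apply, Matrix.diagonal_apply_ne _ hij.ne',
        hij, not_lt_of_gt hij]
  have hAx : A *ᵥ x = b := by
    rw [hx, mulVec_mulVec, mul_nonsing_inv A hA, one_mulVec]
  have hfix : x = G *ᵥ x + D⁻¹ *ᵥ b := by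
    have h1 : D *ᵥ x - (L + U) *ᵥ x = b := by
      rw [← sub_mulVec, ← hALU, hAx]
    have h2 : D *ᵥ x = (L + U) *ᵥ x + b := by
      rw [← h1]; ring
    calc x = (D⁻¹ * D) *ᵥ x := by rw [nonsing_inv_mul D hDdet, one_mulVec]
    _ = D⁻¹ *ᵥ (D *ᵥ x) := by rw [← mulVec_mulVec]
    _ = D⁻¹ *ᵥ ((L + U) *ᵥ x + b) := by rw [h2]
    _ = D⁻¹ *ᵥ ((L + U) *ᵥ x) + D⁻¹ *ᵥ b := by rw [mulVec_add]
    _ = G *ᵥ x + D⁻¹ *ᵥ b := by rw [hG, ← mulVec_mulVec]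
  have herr : ∀ t, X t - x = G ^ t *ᵥ (X 0 - x) := by
    intro t
    induction t with
    | zero => simp
    | succ t ih =>
      rw [hX t]
      have step : G *ᵥ X t + D⁻¹ *ᵥ b - x = G *ᵥ (X t - x) := by
        nth_rewrite 1 [hfix]
        rw [mulVec_sub]
        abel
      rw [step, ih, mulVec_mulVec, ← pow_succ']
  have hzero : Tendsto (fun t => X t - x) atTop (𝓝 0) := by
    have hlim : Tendsto (fun t : ℕ => ‖G ^ t‖ * ‖X 0 - x‖) atTop (𝓝 0) := by
      simpa using (aux_pow_norm_tendsto G hρ).mul_const ‖X 0 - x‖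
    refine squeeze_zero_norm (fun t => ?_) hlim
    rw [herr t]
    exact Matrix.linfty_opNorm_mulVec _ _
  have := hzero.add_const x
  simpa using this

end Aux
end
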